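/- Let X be a geodesic metric space, e ∈ X, and N a Morse gauge. If x, y ∈ X_e^{(N)} then any geodesic [x,y] is N'-Morse, where N' depends only on N. Consequently X_e^{(N)} is an N'-stable subset of X: every pair of points in X_e^{(N)} is connected by an N'-Morse geodesic in X. -/

import Mathlib

open Metric Set

/-- A `(λ, ε)`-quasi-geodesic defined on the interval `[a,b]`. -/
def IsQuasiGeodesicOn {X : Type*} [MetricSpace X] (lam eps a b : ℝ) (σ : ℝ → X) : Prop :=
  ∀ s ∈ Set.Icc a b, ∀ t ∈ Set.Icc a b,
    (1 / lam) * |s - t| - eps ≤ dist (σ s) (σ t) ∧ dist (σ s) (σ t) ≤ lam * |s - t| + eps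

/-- A geodesic segment from `x` to `y`, parametrized by arclength on `[0, dist x y]`. -/
def IsGeodesicSegment {X : Type*} [MetricSpace X] (γ : ℝ → X) (x y : X) : Prop :=
  γ 0 = x ∧ γ (dist x y) = y ∧
    ∀ s ∈ Set.Icc (0:ℝ) (dist x y), ∀ t ∈ Set.Icc (0:ℝ) (dist x y),
      dist (γ s) (γ t) = |s - t|

/-- A geodesic metric space: any two points are joined by a geodesic segment. -/
def GeodesicSpace (X : Type*) [MetricSpace X] : Prop :=
  ∀ x y : X, ∃ γ : ℝ → X, IsGeodesicSegment γ x y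

/-- A geodesic ray, parametrized by arclength on `[0, ∞)`. -/
def IsGeodesicRay {X : Type*} [MetricSpace X] (γ : ℝ → X) : Prop :=
  ∀ s ∈ Set.Ici (0:ℝ), ∀ t ∈ Set.Ici (0:ℝ), dist (γ s) (γ t) = |s - t|

/-- A set `im` (the image of a geodesic) is `N`-Morse for a Morse gauge `N : ℝ → ℝ → ℝ` if
every `(λ,ε)`-quasi-geodesic (`λ ≥ 1`, `ε ≥ 0`) with endpoints on `im` stays in the
`N λ ε`-neighborhood of `im`. -/
def IsMorseWith {X : Type*} [MetricSpace X] (N : ℝ → ℝ → ℝ) (im : Set X) : Prop :=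
  ∀ lam eps : ℝ, 1 ≤ lam → 0 ≤ eps → ∀ a b : ℝ, a ≤ b → ∀ σ : ℝ → X,
    IsQuasiGeodesicOn lam eps a b σ → σ a ∈ im → σ b ∈ im →
    ∀ t ∈ Set.Icc a b, Metric.infDist (σ t) im ≤ N lam eps

/-- An `N`-Morse geodesic ray. -/
def IsMorseRay {X : Type*} [MetricSpace X] (N : ℝ → ℝ → ℝ) (γ : ℝ → X) : Prop :=
  IsGeodesicRay γ ∧ IsMorseWith N (γ '' Set.Ici 0)

/-- An `N`-Morse geodesic segment from `x` to `y`. -/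
def IsMorseSegment {X : Type*} [MetricSpace X] (N : ℝ → ℝ → ℝ) (γ : ℝ → X) (x y : X) : Prop :=
  IsGeodesicSegment γ x y ∧ IsMorseWith N (γ '' Set.Icc 0 (dist x y))

/-- The stratum `X_e^{(N)}`: points of `X` joined to `e` by an `N`-Morse geodesic. -/
def stratum {X : Type*} [MetricSpace X] (N : ℝ → ℝ → ℝ) (e : X) : Set X :=
  {x | ∃ γ : ℝ → X, IsMorseSegment N γ e x}


/-!
Let `α`, `β` be `N`-Morse geodesics from `e` to `x`, `y`, and let `γ w` be the point of `γ = [x, y]`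
closest to `e`. A quasi-geodesic ending at its point closest to `e`, continued by a geodesic to `e`,
is again a quasi-geodesic with endpoints on a Morse geodesic; so `γ` runs uniformly close to `α`
before `w` and to `β` after `w`.

Let `σ` be a quasi-geodesic with endpoints on `γ`, moved onto `α ∪ β`. If both endpoints lie on `α`,
the Morse property keeps `σ` near `α`, and a quasi-geodesic tracking a geodesic from `e` cannot
overshoot the distances to `e` of its endpoints; so `σ` stays near the stretch of `α` followed by
`γ`, hence near `γ`. Otherwise split `σ` at its point closest to `e` and argue in the same way with
the two halves; a part of `σ` diving below the level of `γ w` starts and ends near `γ w`, so it is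
short and stays near `γ w`.
-/

variable {X : Type*} [MetricSpace X]

def IsGeodesicOn (g : ℝ → X) (c d : ℝ) : Prop :=
  ∀ s ∈ Icc c d, ∀ t ∈ Icc c d, dist (g s) (g t) = |s - t|

structure IsGeodesicFrom (g : ℝ → X) (e : X) (G : ℝ) : Prop where
  nonneg : 0 ≤ G
  apply_zero : g 0 = e
  isGeodesicOn : IsGeodesicOn g 0 G

def StaysNear (τ : ℝ → X) (a b : ℝ) (g : ℝ → X) (c d D : ℝ) : Prop :=
  ∀ t ∈ Icc a b, ∃ r ∈ Icc c d, dist (τ t) (g r) ≤ D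

theorem one_div_mul_sub_le {lam x d c : ℝ} (hlam : 0 < lam) (h : x ≤ lam * (d + c)) :
    1 / lam * x - c ≤ d := by
  rwa [one_div_mul_eq_div, sub_le_iff_le_add, div_le_iff₀' hlam]

theorem abs_reflect_sub {a b s t : ℝ} : |(a + b - s) - (a + b - t)| = |s - t| := by
  rw [sub_sub_sub_cancel_left, abs_sub_comm]

theorem reflect_mem_Icc {a b t : ℝ} (ht : t ∈ Icc a b) : a + b - t ∈ Icc a b :=
  ⟨by linarith [ht.2], by linarith [ht.1]⟩

namespace IsQuasiGeodesicOn

variable {lam eps a b : ℝ} {σ : ℝ → X}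

theorem of_le (h : ∀ s ∈ Icc a b, ∀ t ∈ Icc a b, s ≤ t →
      1 / lam * |s - t| - eps ≤ dist (σ s) (σ t) ∧ dist (σ s) (σ t) ≤ lam * |s - t| + eps) :
    IsQuasiGeodesicOn lam eps a b σ := by
  intro s hs t ht
  rcases le_total s t with hst | hts
  · exact h s hs t ht hst
  · rw [dist_comm, abs_sub_comm]
    exact h t ht s hs hts

theorem mono {lam' eps' : ℝ} (hσ : IsQuasiGeodesicOn lam eps a b σ) (hlam : 0 < lam)
    (hll : lam ≤ lam') (hee : eps ≤ eps') : IsQuasiGeodesicOn lam' eps' a b σ := by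
  intro s hs t ht
  obtain ⟨h₁, h₂⟩ := hσ s hs t ht
  have : 1 / lam' * |s - t| ≤ 1 / lam * |s - t| := by gcongr
  have : lam * |s - t| ≤ lam' * |s - t| := by gcongr
  constructor <;> linarith

theorem mono_Icc {a' b' : ℝ} (hσ : IsQuasiGeodesicOn lam eps a b σ) (h : Icc a' b' ⊆ Icc a b) :
    IsQuasiGeodesicOn lam eps a' b' σ :=
  fun s hs t ht => hσ s (h hs) t (h ht)

theorem reverse (hσ : IsQuasiGeodesicOn lam eps a b σ) :
    IsQuasiGeodesicOn lam eps a b (fun t => σ (a + b - t)) := by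
  intro s hs t ht
  simpa only [abs_reflect_sub] using hσ _ (reflect_mem_Icc hs) _ (reflect_mem_Icc ht)

theorem sub_le (hσ : IsQuasiGeodesicOn lam eps a b σ) (hlam : 0 < lam) {s t : ℝ}
    (hs : s ∈ Icc a b) (ht : t ∈ Icc a b) (hst : s ≤ t) :
    t - s ≤ lam * (dist (σ s) (σ t) + eps) := by
  have h := (hσ s hs t ht).1
  rw [abs_sub_comm, abs_of_nonneg (sub_nonneg.2 hst), one_div_mul_eq_div, sub_le_iff_le_add,
    div_le_iff₀' hlam] at h
  exact h

theorem eps_nonneg (hσ : IsQuasiGeodesicOn lam eps a b σ) (hab : a ≤ b) : 0 ≤ eps := by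
  simpa using (hσ a ⟨le_rfl, hab⟩ a ⟨le_rfl, hab⟩).2.trans' dist_nonneg

theorem abs_dist_sub_le (hσ : IsQuasiGeodesicOn lam eps a b σ) (z : X) {s t : ℝ}
    (hs : s ∈ Icc a b) (ht : t ∈ Icc a b) :
    |dist (σ s) z - dist (σ t) z| ≤ lam * |s - t| + eps :=
  (_root_.abs_dist_sub_le _ _ _).trans (hσ s hs t ht).2

theorem of_dist_le {σ' : ℝ → X} {M : ℝ} (hσ : IsQuasiGeodesicOn lam eps a b σ)
    (h : ∀ t, dist (σ t) (σ' t) ≤ M) : IsQuasiGeodesicOn lam (eps + 2 * M) a b σ' := by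
  intro s hs t ht
  obtain ⟨h₁, h₂⟩ := hσ s hs t ht
  have h₃ := dist_triangle4 (σ s) (σ' s) (σ' t) (σ t)
  have h₄ := dist_triangle4 (σ' s) (σ s) (σ t) (σ' t)
  rw [dist_comm (σ' t) (σ t)] at h₃
  rw [dist_comm (σ' s) (σ s)] at h₄
  constructor <;> linarith [h s, h t]

theorem exists_endpoints_update (hσ : IsQuasiGeodesicOn lam eps a b σ) (hab : a ≠ b) {u v : X}
    {M : ℝ} (hM : 0 ≤ M) (hu : dist (σ a) u ≤ M) (hv : dist (σ b) v ≤ M) :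
    ∃ σ' : ℝ → X, IsQuasiGeodesicOn lam (eps + 2 * M) a b σ' ∧ σ' a = u ∧ σ' b = v ∧
      ∀ t, dist (σ t) (σ' t) ≤ M := by
  set σ' := Function.update (Function.update σ a u) b v
  have hdist : ∀ t, dist (σ t) (σ' t) ≤ M := by
    intro t
    by_cases htb : t = b
    · subst htb; simpa [σ'] using hv
    by_cases hta : t = a
    · subst hta; simpa [σ', htb] using hu
    simpa [σ', htb, hta] using hM
  exact ⟨σ', hσ.of_dist_le hdist, by simp [σ', hab], by simp [σ'], hdist⟩

theorem dist_le_of_endpoints (hσ : IsQuasiGeodesicOn lam eps a b σ) (hlam : 0 < lam) {z : X}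
    {Q s s' : ℝ} (hs : s ∈ Icc a b) (hs' : s' ∈ Icc a b) (hzs : dist (σ s) z ≤ Q)
    (hzs' : dist (σ s') z ≤ Q) {t : ℝ} (ht : t ∈ Icc s s') :
    dist (σ t) z ≤ Q + lam ^ 2 * (2 * Q + eps) + eps := by
  have htI : t ∈ Icc a b := ⟨hs.1.trans ht.1, ht.2.trans hs'.2⟩
  have hlen : s' - s ≤ lam * (2 * Q + eps) := by
    refine (hσ.sub_le hlam hs hs' (ht.1.trans ht.2)).trans ?_
    have := dist_triangle_right (σ s) (σ s') z
    gcongr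
    linarith
  have hst := (hσ s hs t htI).2
  rw [abs_sub_comm, abs_of_nonneg (sub_nonneg.2 ht.1)] at hst
  have : lam * (t - s) ≤ lam * (lam * (2 * Q + eps)) := by gcongr; linarith [ht.2]
  have := dist_triangle_left (σ t) z (σ s)
  nlinarith

end IsQuasiGeodesicOn

namespace IsGeodesicOn

variable {g : ℝ → X} {c d : ℝ}

theorem isQuasiGeodesicOn (hg : IsGeodesicOn g c d) : IsQuasiGeodesicOn 1 0 c d g := by
  intro s hs t ht
  rw [hg s hs t ht]
  norm_num

theorem continuousOn (hg : IsGeodesicOn g c d) : ContinuousOn g (Icc c d) :=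
  (LipschitzOnWith.of_dist_le_mul (K := 1) fun s hs t ht => by
    rw [hg s hs t ht, Real.dist_eq]; simp).continuousOn

end IsGeodesicOn

namespace IsGeodesicFrom

variable {g : ℝ → X} {e z z' : X} {G r r' D D' : ℝ}

theorem self_mem_image (hg : IsGeodesicFrom g e G) : e ∈ g '' Icc 0 G :=
  ⟨0, ⟨le_rfl, hg.nonneg⟩, hg.apply_zero⟩

theorem dist_apply (hg : IsGeodesicFrom g e G) (hr : r ∈ Icc 0 G) : dist (g r) e = r := by
  rw [← hg.apply_zero, hg.isGeodesicOn r hr 0 ⟨le_rfl, hg.nonneg⟩, sub_zero, abs_of_nonneg hr.1]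

theorem abs_sub_dist_le (hg : IsGeodesicFrom g e G) (hr : r ∈ Icc 0 G) (h : dist z (g r) ≤ D) :
    |r - dist z e| ≤ D := by
  calc |r - dist z e| = |dist (g r) e - dist z e| := by rw [hg.dist_apply hr]
    _ ≤ dist (g r) z := abs_dist_sub_le _ _ _
    _ ≤ D := by rwa [dist_comm]

theorem dist_le (hg : IsGeodesicFrom g e G) (hr : r ∈ Icc 0 G) (hr' : r' ∈ Icc 0 G)
    (hz : dist z (g r) ≤ D) (hz' : dist z' (g r') ≤ D') :
    dist z z' ≤ 2 * D + 2 * D' + |dist z e - dist z' e| := by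
  have h₁ := hg.abs_sub_dist_le hr hz
  have h₂ := hg.abs_sub_dist_le hr' hz'
  have h₃ := abs_sub_le r (dist z e) r'
  have h₄ := abs_sub_le (dist z e) (dist z' e) r'
  rw [abs_sub_comm (dist z' e)] at h₄
  have := dist_triangle4 z (g r) (g r') z'
  rw [hg.isGeodesicOn r hr r' hr', dist_comm (g r')] at this
  linarith

end IsGeodesicFrom

namespace StaysNear

variable {τ σ g : ℝ → X} {a b c d D : ℝ}

theorem mono_Icc {a' b' : ℝ} (h : StaysNear τ a b g c d D) (hab : Icc a' b' ⊆ Icc a b) :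
    StaysNear τ a' b' g c d D :=
  fun t ht => h t (hab ht)

theorem of_reverse (h : StaysNear (fun t => τ (a + b - t)) a b g c d D) :
    StaysNear τ a b g c d D := by
  intro t ht
  simpa using h _ (reflect_mem_Icc ht)

theorem of_dist_le {u v M B : ℝ} (h : StaysNear σ a b g u v B) (hτ : ∀ t, dist (τ t) (σ t) ≤ M)
    (huv : Icc u v ⊆ Icc c d) (hB : B + M ≤ D) : StaysNear τ a b g c d D := by
  intro t ht
  obtain ⟨r, hr, h⟩ := h t ht
  exact ⟨r, huv hr, (dist_triangle _ _ _).trans (by linarith [hτ t])⟩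

end StaysNear

/-- The `+ 1` makes the bound strict, so that it is attained by an actual point of the set. -/
def morseBound (N : ℝ → ℝ → ℝ) (lam eps : ℝ) : ℝ := max (N lam eps) 0 + 1

theorem one_le_morseBound (N : ℝ → ℝ → ℝ) (lam eps : ℝ) : 1 ≤ morseBound N lam eps :=
  le_add_of_nonneg_left (le_max_right _ _)

theorem IsMorseWith.staysNear {N : ℝ → ℝ → ℝ} {g σ : ℝ → X} {G lam eps a b : ℝ}
    (hN : IsMorseWith N (g '' Icc 0 G)) (hlam : 1 ≤ lam) (heps : 0 ≤ eps) (hab : a ≤ b)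
    (hσ : IsQuasiGeodesicOn lam eps a b σ) (ha : σ a ∈ g '' Icc 0 G) (hb : σ b ∈ g '' Icc 0 G) :
    StaysNear σ a b g 0 G (morseBound N lam eps) := by
  intro t ht
  have hlt : infDist (σ t) (g '' Icc 0 G) < morseBound N lam eps :=
    (hN lam eps hlam heps a b hab σ hσ ha hb t ht).trans_lt
      (by unfold morseBound; linarith [le_max_left (N lam eps) 0])
  obtain ⟨_, ⟨r, hr, rfl⟩, h⟩ := (infDist_lt_iff ⟨_, ha⟩).1 hlt
  exact ⟨r, hr, h.le⟩

section Crossing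

variable {φ : ℝ → ℝ} {lam eps t₀ t₁ V : ℝ}

theorem exists_first_crossing (hlam : 0 < lam) (h₀₁ : t₀ ≤ t₁)
    (hφ : ∀ s ∈ Icc t₀ t₁, ∀ t ∈ Icc t₀ t₁, |φ s - φ t| ≤ lam * |s - t| + eps)
    (h₀ : V ≤ φ t₀) (h₁ : φ t₁ ≤ V) :
    ∃ c ∈ Icc t₀ t₁, |φ c - V| ≤ eps ∧ ∀ u ∈ Ico t₀ c, V < φ u := by
  have heps : 0 ≤ eps := by simpa using hφ t₀ ⟨le_rfl, h₀₁⟩ t₀ ⟨le_rfl, h₀₁⟩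
  set S := {s ∈ Icc t₀ t₁ | φ s ≤ V}
  have hS : S.Nonempty := ⟨t₁, ⟨h₀₁, le_rfl⟩, h₁⟩
  have hSb : BddBelow S := ⟨t₀, fun s hs => hs.1.1⟩
  have hc : sInf S ∈ Icc t₀ t₁ := ⟨le_csInf hS fun s hs => hs.1.1, csInf_le hSb ⟨⟨h₀₁, le_rfl⟩, h₁⟩⟩
  have hbefore : ∀ u ∈ Ico t₀ (sInf S), V < φ u := fun u hu =>
    lt_of_not_ge fun h => (csInf_le hSb ⟨⟨hu.1, hu.2.le.trans hc.2⟩, h⟩).not_gt hu.2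
  refine ⟨sInf S, hc, abs_le.2 ⟨?_, ?_⟩, hbefore⟩
  · rcases hc.1.eq_or_lt with h | h
    · rw [← h]; linarith
    refine le_of_forall_pos_le_add fun δ hδ => ?_
    set u := max t₀ (sInf S - δ / lam)
    have hu : u ∈ Ico t₀ (sInf S) := ⟨le_max_left _ _, max_lt h (by linarith [div_pos hδ hlam])⟩
    have hcu : lam * |sInf S - u| ≤ δ := by
      rw [abs_of_pos (sub_pos.2 hu.2), ← le_div_iff₀' hlam]
      linarith [le_max_right t₀ (sInf S - δ / lam)]
    have := hφ _ hc u ⟨hu.1, hu.2.le.trans hc.2⟩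
    linarith [hbefore u hu, le_abs_self (φ u - φ (sInf S)), abs_sub_comm (φ u) (φ (sInf S))]
  · refine le_of_forall_pos_le_add fun δ hδ => ?_
    obtain ⟨s, hs, hsc⟩ := exists_lt_of_csInf_lt hS (lt_add_of_pos_right (sInf S) (div_pos hδ hlam))
    have hcs : lam * |sInf S - s| ≤ δ := by
      rw [abs_sub_comm, abs_of_nonneg (sub_nonneg.2 (csInf_le hSb hs)), ← le_div_iff₀' hlam]
      linarith
    have := hφ _ hc s hs.1
    linarith [hs.2, le_abs_self (φ (sInf S) - φ s)]

theorem exists_last_crossing (hlam : 0 < lam) (h₀₁ : t₀ ≤ t₁)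
    (hφ : ∀ s ∈ Icc t₀ t₁, ∀ t ∈ Icc t₀ t₁, |φ s - φ t| ≤ lam * |s - t| + eps)
    (h₀ : φ t₀ ≤ V) (h₁ : V ≤ φ t₁) :
    ∃ c ∈ Icc t₀ t₁, |φ c - V| ≤ eps ∧ ∀ u ∈ Ioc c t₁, V < φ u := by
  have hφ' : ∀ s ∈ Icc t₀ t₁, ∀ t ∈ Icc t₀ t₁,
      |φ (t₀ + t₁ - s) - φ (t₀ + t₁ - t)| ≤ lam * |s - t| + eps := fun s hs t ht => by
    simpa only [abs_reflect_sub] using hφ _ (reflect_mem_Icc hs) _ (reflect_mem_Icc ht)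
  obtain ⟨c, hc, hcV, hbefore⟩ := exists_first_crossing (φ := fun t => φ (t₀ + t₁ - t)) hlam h₀₁
    hφ' (by simpa using h₁) (by simpa using h₀)
  refine ⟨t₀ + t₁ - c, reflect_mem_Icc hc, hcV, fun u hu => ?_⟩
  simpa using hbefore (t₀ + t₁ - u) ⟨by linarith [hu.2], by linarith [hu.1]⟩

end Crossing

def pinchBound (lam eps C : ℝ) : ℝ := 2 * eps + lam ^ 2 * (C + 3 * eps)

theorem pinchBound_nonneg {lam eps C : ℝ} (heps : 0 ≤ eps) (hC : 0 ≤ C) :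
    0 ≤ pinchBound lam eps C := by
  unfold pinchBound; positivity

section Pinch

variable {τ : ℝ → X} {φ : ℝ → ℝ} {lam eps C t₀ t₁ : ℝ}

/-- If `φ t` exceeded the endpoint values, the last time before `t` and the first time after `t`
at which `φ` is back at that level would be close in space, hence in time, hence to `t`. -/
theorem le_max_add_pinchBound (hlam : 0 < lam) (heps : 0 ≤ eps) (hC : 0 ≤ C)
    (hτ : IsQuasiGeodesicOn lam eps t₀ t₁ τ)
    (hφ : ∀ s ∈ Icc t₀ t₁, ∀ t ∈ Icc t₀ t₁, |φ s - φ t| ≤ dist (τ s) (τ t))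
    (hφC : ∀ s ∈ Icc t₀ t₁, ∀ t ∈ Icc t₀ t₁, dist (τ s) (τ t) ≤ C + |φ s - φ t|)
    {t : ℝ} (ht : t ∈ Icc t₀ t₁) :
    φ t ≤ max (φ t₀) (φ t₁) + pinchBound lam eps C := by
  set V := max (φ t₀) (φ t₁)
  have hΛ := pinchBound_nonneg (lam := lam) heps hC
  rcases le_or_gt (φ t) V with htV | htV
  · linarith
  have hlip : ∀ s ∈ Icc t₀ t₁, ∀ u ∈ Icc t₀ t₁, |φ s - φ u| ≤ lam * |s - u| + eps :=
    fun s hs u hu => (hφ s hs u hu).trans (hτ s hs u hu).2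
  have hsub₀ : Icc t₀ t ⊆ Icc t₀ t₁ := Icc_subset_Icc le_rfl ht.2
  have hsub₁ : Icc t t₁ ⊆ Icc t₀ t₁ := Icc_subset_Icc ht.1 le_rfl
  obtain ⟨c, hc, hcV, -⟩ := exists_last_crossing hlam ht.1
    (fun s hs u hu => hlip s (hsub₀ hs) u (hsub₀ hu)) (le_max_left _ _) htV.le
  obtain ⟨c', hc', hc'V, -⟩ := exists_first_crossing hlam ht.2
    (fun s hs u hu => hlip s (hsub₁ hs) u (hsub₁ hu)) htV.le (le_max_right _ _)
  have hcc' : dist (τ c) (τ c') ≤ C + 2 * eps := by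
    have := hφC c (hsub₀ hc) c' (hsub₁ hc')
    have := abs_sub_le (φ c) V (φ c')
    rw [abs_sub_comm V] at this
    linarith
  have hlen : c' - c ≤ lam * (C + 3 * eps) :=
    (hτ.sub_le hlam (hsub₀ hc) (hsub₁ hc') (hc.2.trans hc'.1)).trans
      (mul_le_mul_of_nonneg_left (by linarith) hlam.le)
  have hct := (hτ c (hsub₀ hc) t ht).2
  rw [abs_sub_comm, abs_of_nonneg (sub_nonneg.2 hc.2)] at hct
  have : lam * (t - c) ≤ lam * (lam * (C + 3 * eps)) := by gcongr; linarith [hc'.1]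
  have := hφ t ht c (hsub₀ hc)
  unfold pinchBound
  linarith [le_abs_self (φ t - φ c), abs_le.1 hcV, dist_comm (τ t) (τ c)]

theorem min_sub_pinchBound_le (hlam : 0 < lam) (heps : 0 ≤ eps) (hC : 0 ≤ C)
    (hτ : IsQuasiGeodesicOn lam eps t₀ t₁ τ)
    (hφ : ∀ s ∈ Icc t₀ t₁, ∀ t ∈ Icc t₀ t₁, |φ s - φ t| ≤ dist (τ s) (τ t))
    (hφC : ∀ s ∈ Icc t₀ t₁, ∀ t ∈ Icc t₀ t₁, dist (τ s) (τ t) ≤ C + |φ s - φ t|)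
    {t : ℝ} (ht : t ∈ Icc t₀ t₁) :
    min (φ t₀) (φ t₁) - pinchBound lam eps C ≤ φ t := by
  have := le_max_add_pinchBound (φ := fun s => -φ s) hlam heps hC hτ
    (fun s hs u hu => by rw [neg_sub_neg, abs_sub_comm]; exact hφ s hs u hu)
    (fun s hs u hu => by rw [neg_sub_neg, abs_sub_comm]; exact hφC s hs u hu) ht
  rw [max_neg_neg] at this
  linarith

end Pinch

namespace StaysNear

variable {σ g : ℝ → X} {e : X} {G D lam eps a b : ℝ}

theorem dist_le_four_mul_add (hg : IsGeodesicFrom g e G) (hσ : StaysNear σ a b g 0 G D) :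
    ∀ s ∈ Icc a b, ∀ t ∈ Icc a b, dist (σ s) (σ t) ≤ 4 * D + |dist (σ s) e - dist (σ t) e| := by
  intro s hs t ht
  obtain ⟨r, hr, hsr⟩ := hσ s hs
  obtain ⟨r', hr', htr'⟩ := hσ t ht
  linarith [hg.dist_le hr hr' hsr htr']

theorem dist_le_max_add (hg : IsGeodesicFrom g e G) (hσ : StaysNear σ a b g 0 G D)
    (hτ : IsQuasiGeodesicOn lam eps a b σ) (hlam : 0 < lam) (heps : 0 ≤ eps) (hD : 0 ≤ D)
    {t : ℝ} (ht : t ∈ Icc a b) :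
    dist (σ t) e ≤ max (dist (σ a) e) (dist (σ b) e) + pinchBound lam eps (4 * D) :=
  le_max_add_pinchBound (φ := fun s => dist (σ s) e) hlam heps (by positivity) hτ
    (fun _ _ _ _ => abs_dist_sub_le _ _ _) (hσ.dist_le_four_mul_add hg) ht

theorem min_sub_le_dist (hg : IsGeodesicFrom g e G) (hσ : StaysNear σ a b g 0 G D)
    (hτ : IsQuasiGeodesicOn lam eps a b σ) (hlam : 0 < lam) (heps : 0 ≤ eps) (hD : 0 ≤ D)
    {t : ℝ} (ht : t ∈ Icc a b) :
    min (dist (σ a) e) (dist (σ b) e) - pinchBound lam eps (4 * D) ≤ dist (σ t) e :=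
  min_sub_pinchBound_le (φ := fun s => dist (σ s) e) hlam heps (by positivity) hτ
    (fun _ _ _ _ => abs_dist_sub_le _ _ _) (hσ.dist_le_four_mul_add hg) ht

end StaysNear

section Append

variable {τ k : ℝ → X} {e : X} {lam eps a b : ℝ}

theorem dist_bounds_across_append (hlam : 1 ≤ lam) (hτ : IsQuasiGeodesicOn lam eps a b τ)
    (hk : IsGeodesicSegment k (τ b) e) (hb : ∀ t ∈ Icc a b, dist (τ b) e ≤ dist (τ t) e + 1)
    {s t : ℝ} (hs : s ∈ Icc a b) (ht : t ∈ Icc b (b + dist (τ b) e)) :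
    1 / (2 * lam + 1) * |s - t| - (eps + 2) ≤ dist (τ s) (k (t - b)) ∧
      dist (τ s) (k (t - b)) ≤ (2 * lam + 1) * |s - t| + (eps + 2) := by
  obtain ⟨hk₀, hke, hk⟩ := hk
  set ℓ := dist (τ b) e
  set v := t - b
  have hv : v ∈ Icc 0 ℓ := ⟨by linarith [ht.1], by linarith [ht.2]⟩
  have hkb : dist (τ b) (k v) = v := by
    rw [← hk₀, hk 0 ⟨le_rfl, dist_nonneg⟩ v hv, zero_sub, abs_neg, abs_of_nonneg hv.1]
  have hkv : dist (k v) e = ℓ - v := by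
    rw [← hke, hk v hv ℓ ⟨dist_nonneg, le_rfl⟩, abs_of_nonpos (by linarith [hv.2]), neg_sub]
  have hst : |s - t| = (b - s) + v := by
    rw [abs_sub_comm, abs_of_nonneg (by linarith [hs.2, ht.1])]; ring
  have hbI : b ∈ Icc a b := ⟨hs.1.trans hs.2, le_rfl⟩
  set d := dist (τ s) (k v)
  have hvd : v ≤ d + 1 := by linarith [hb s hs, dist_triangle (τ s) (k v) e]
  have hsb : dist (τ s) (τ b) ≤ 2 * d + 1 := by linarith [dist_triangle_right (τ s) (τ b) (k v)]
  have hbs : b - s ≤ lam * (2 * d + 1 + eps) :=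
    (hτ.sub_le (by linarith) hs hbI hs.2).trans (by gcongr)
  have hup := (hτ s hs b hbI).2
  rw [abs_sub_comm, abs_of_nonneg (sub_nonneg.2 hs.2)] at hup
  have heps := hτ.eps_nonneg (hs.1.trans hs.2)
  rw [hst]
  constructor
  · refine one_div_mul_sub_le (by linarith) ?_
    nlinarith [dist_nonneg (x := τ s) (y := k v)]
  · nlinarith [dist_triangle (τ s) (τ b) (k v), mul_nonneg (by linarith : (0:ℝ) ≤ lam) hv.1,
      mul_nonneg (by linarith : (0:ℝ) ≤ lam) (sub_nonneg.2 hs.2)]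

theorem isQuasiGeodesicOn_append (hlam : 1 ≤ lam) (heps : 0 ≤ eps)
    (hτ : IsQuasiGeodesicOn lam eps a b τ) (hk : IsGeodesicSegment k (τ b) e)
    (hb : ∀ t ∈ Icc a b, dist (τ b) e ≤ dist (τ t) e + 1) :
    IsQuasiGeodesicOn (2 * lam + 1) (eps + 2) a (b + dist (τ b) e)
      (fun t => if t ≤ b then τ t else k (t - b)) := by
  have hτ' := hτ.mono (by linarith) (by linarith : lam ≤ 2 * lam + 1) (by linarith : eps ≤ eps + 2)
  have hk' :
      IsQuasiGeodesicOn (2 * lam + 1) (eps + 2) b (b + dist (τ b) e) (fun t => k (t - b)) := by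
    have : IsGeodesicOn (fun t => k (t - b)) b (b + dist (τ b) e) := fun s hs t ht => by
      rw [hk.2.2 (s - b) ⟨by linarith [hs.1], by linarith [hs.2]⟩ (t - b)
        ⟨by linarith [ht.1], by linarith [ht.2]⟩, sub_sub_sub_cancel_right]
    exact this.isQuasiGeodesicOn.mono one_pos (by linarith) (by linarith)
  refine IsQuasiGeodesicOn.of_le fun s hs t ht hst => ?_
  rcases le_or_gt t b with htb | hbt
  · simp only [if_pos htb, if_pos (hst.trans htb)]
    exact hτ' s ⟨hs.1, hst.trans htb⟩ t ⟨ht.1, htb⟩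
  rcases le_or_gt s b with hsb | hbs
  · simp only [if_pos hsb, if_neg hbt.not_ge]
    exact dist_bounds_across_append hlam hτ hk hb ⟨hs.1, hsb⟩ ⟨hbt.le, ht.2⟩
  · simp only [if_neg hbs.not_ge, if_neg hbt.not_ge]
    exact hk' s ⟨hbs.le, hs.2⟩ t ⟨hbt.le, ht.2⟩

end Append

section Leg

variable {N : ℝ → ℝ → ℝ} {g τ : ℝ → X} {e : X} {G lam eps a b : ℝ}

/-- Continued by a geodesic to `e`, the quasi-geodesic `τ` stays quasi-geodesic because its end is
(almost) its point closest to `e`; the Morse property of `g` then applies. -/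
theorem staysNear_of_closest_end (hX : GeodesicSpace X) (hg : IsGeodesicFrom g e G)
    (hN : IsMorseWith N (g '' Icc 0 G)) (hlam : 1 ≤ lam) (heps : 0 ≤ eps) (hab : a ≤ b)
    (hτ : IsQuasiGeodesicOn lam eps a b τ) (ha : τ a ∈ g '' Icc 0 G)
    (hb : ∀ t ∈ Icc a b, dist (τ b) e ≤ dist (τ t) e + 1) :
    StaysNear τ a b g 0 G (morseBound N (2 * lam + 1) (eps + 2)) := by
  obtain ⟨k, hk⟩ := hX (τ b) e
  set Φ : ℝ → X := fun t => if t ≤ b then τ t else k (t - b)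
  have hΦτ : ∀ t ≤ b, Φ t = τ t := fun t ht => if_pos ht
  have hbℓ : b ≤ b + dist (τ b) e := le_add_of_nonneg_right dist_nonneg
  have hΦe : Φ (b + dist (τ b) e) ∈ g '' Icc 0 G := by
    rcases hbℓ.eq_or_lt with h | h
    · rw [← h, hΦτ b le_rfl, dist_eq_zero.1 (by linarith : dist (τ b) e = 0)]
      exact hg.self_mem_image
    · simp only [Φ, if_neg h.not_ge, add_sub_cancel_left, hk.2.1]
      exact hg.self_mem_image
  have hnear := hN.staysNear (by linarith) (by linarith) (hab.trans hbℓ)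
    (isQuasiGeodesicOn_append hlam heps hτ hk hb) (by rwa [if_pos hab]) hΦe
  intro t ht
  rw [← hΦτ t ht.2]
  exact hnear t ⟨ht.1, ht.2.trans hbℓ⟩

theorem staysNear_of_closest_start (hX : GeodesicSpace X) (hg : IsGeodesicFrom g e G)
    (hN : IsMorseWith N (g '' Icc 0 G)) (hlam : 1 ≤ lam) (heps : 0 ≤ eps) (hab : a ≤ b)
    (hτ : IsQuasiGeodesicOn lam eps a b τ) (hb : τ b ∈ g '' Icc 0 G)
    (ha : ∀ t ∈ Icc a b, dist (τ a) e ≤ dist (τ t) e + 1) :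
    StaysNear τ a b g 0 G (morseBound N (2 * lam + 1) (eps + 2)) := by
  refine StaysNear.of_reverse (staysNear_of_closest_end hX hg hN hlam heps hab hτ.reverse
    (by simpa using hb) fun t ht => ?_)
  simpa using ha _ (reflect_mem_Icc ht)

end Leg

/-- By the intermediate value theorem some `γ s` is as far from `e` as `σ t` (up to `W`), and two
points near `g` at about the same distance from `e` are close. -/
theorem StaysNear.staysNear_of_window {g γ σ : ℝ → X} {e : X} {G u v M D W a b : ℝ}
    (hg : IsGeodesicFrom g e G) (hγ : ContinuousOn γ (Icc u v)) (huv : u ≤ v)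
    (hγg : StaysNear γ u v g 0 G M) (hW : 0 ≤ W) (hσ : StaysNear σ a b g 0 G D)
    (hlo : ∀ t ∈ Icc a b, min (dist (γ u) e) (dist (γ v) e) - W ≤ dist (σ t) e)
    (hhi : ∀ t ∈ Icc a b, dist (σ t) e ≤ max (dist (γ u) e) (dist (γ v) e) + W) :
    StaysNear σ a b γ u v (2 * D + 2 * M + W) := by
  intro t ht
  obtain ⟨r, hr, hz⟩ := hσ t ht
  set ψ : ℝ → ℝ := fun s => dist (γ s) e
  set ρ := max (min (dist (σ t) e) (max (ψ u) (ψ v))) (min (ψ u) (ψ v))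
  have hρ : ρ ∈ uIcc (ψ u) (ψ v) := ⟨le_max_right _ _, max_le (min_le_right _ _) min_le_max⟩
  have hzρ : |dist (σ t) e - ρ| ≤ W := by
    have := min_le_max (a := ψ u) (b := ψ v)
    have := hlo t ht
    have := hhi t ht
    rw [abs_le]
    constructor <;> rcases max_cases (min (dist (σ t) e) (max (ψ u) (ψ v))) (min (ψ u) (ψ v))
      with ⟨h, _⟩ | ⟨h, _⟩ <;> rcases min_cases (dist (σ t) e) (max (ψ u) (ψ v))
      with ⟨h', _⟩ | ⟨h', _⟩ <;> linarith
  have hψ : ContinuousOn ψ (uIcc u v) := by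
    rw [uIcc_of_le huv]
    exact (continuous_id.dist continuous_const).comp_continuousOn hγ
  obtain ⟨s, hs, hsρ⟩ := intermediate_value_uIcc hψ hρ
  rw [uIcc_of_le huv] at hs
  obtain ⟨r', hr', hsr'⟩ := hγg s hs
  refine ⟨s, hs, ?_⟩
  have := hg.dist_le hr hr' hz hsr'
  rw [show dist (γ s) e = ρ from hsρ] at this
  linarith

theorem exists_forall_le_add_one {f : ℝ → ℝ} {s : Set ℝ} (hs : s.Nonempty)
    (hf : BddBelow (f '' s)) : ∃ x ∈ s, ∀ y ∈ s, f x ≤ f y + 1 := by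
  obtain ⟨_, ⟨x, hx, rfl⟩, hlt⟩ := exists_lt_of_csInf_lt (hs.image f) (lt_add_one (sInf (f '' s)))
  exact ⟨x, hx, fun y hy => by linarith [csInf_le hf ⟨y, hy, rfl⟩]⟩

section ThirdSide

variable {N : ℝ → ℝ → ℝ} {g g₁ g₂ γ σ : ℝ → X} {e : X}
  {G G₁ G₂ u v w M D lam eps a b p q : ℝ}

def boundSameSide (N : ℝ → ℝ → ℝ) (M lam eps : ℝ) : ℝ :=
  2 * morseBound N lam eps + 2 * M + (M + pinchBound lam eps (4 * morseBound N lam eps))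

theorem staysNear_of_endpoints_on (hg : IsGeodesicFrom g e G) (hN : IsMorseWith N (g '' Icc 0 G))
    (hγ : ContinuousOn γ (Icc u v)) (huv : u ≤ v) (hγg : StaysNear γ u v g 0 G M)
    (hlam : 1 ≤ lam) (heps : 0 ≤ eps) (hab : a ≤ b) (hσ : IsQuasiGeodesicOn lam eps a b σ)
    (hp : p ∈ Icc 0 G) (hq : q ∈ Icc 0 G) (hσa : σ a = g p) (hσb : σ b = g q)
    (hup : dist (γ u) (g p) ≤ M) (hvq : dist (γ v) (g q) ≤ M) :
    StaysNear σ a b γ u v (boundSameSide N M lam eps) := by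
  have hD := zero_le_one.trans (one_le_morseBound N lam eps)
  have hσg := hN.staysNear hlam heps hab hσ ⟨p, hp, hσa.symm⟩ ⟨q, hq, hσb.symm⟩
  have hσa' : dist (σ a) e = p := by rw [hσa, hg.dist_apply hp]
  have hσb' : dist (σ b) e = q := by rw [hσb, hg.dist_apply hq]
  have hpq := max_le (hg.abs_sub_dist_le hp hup) (hg.abs_sub_dist_le hq hvq)
  have hmax := abs_le.1 ((abs_max_sub_max_le_max _ _ _ _).trans hpq)
  have hmin := abs_le.1 ((abs_min_sub_min_le_max _ _ _ _).trans hpq)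
  refine hγg.staysNear_of_window hg hγ huv
    (add_nonneg (dist_nonneg.trans hup) (pinchBound_nonneg heps (by positivity))) hσg
    (fun t ht => ?_) (fun t ht => ?_)
  · have := hσg.min_sub_le_dist hg hσ (by linarith) heps hD ht
    rw [hσa', hσb'] at this
    linarith
  · have := hσg.dist_le_max_add hg hσ (by linarith) heps hD ht
    rw [hσa', hσb'] at this
    linarith

/-- If `σ` dives below the level of `γ w`, then `t₁`, `t₂` are its first and last crossings of that
level; otherwise `t₁ = t₂ = tw`. -/
theorem exists_dive_times (hg₁ : IsGeodesicFrom g₁ e G₁) (hg₂ : IsGeodesicFrom g₂ e G₂)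
    (hlam : 0 < lam) (hσ : IsQuasiGeodesicOn lam eps a b σ) {tw : ℝ} (htw : tw ∈ Icc a b)
    (hmin : ∀ t ∈ Icc a b, dist (σ tw) e ≤ dist (σ t) e + 1)
    (h₁ : StaysNear σ a tw g₁ 0 G₁ D) (h₂ : StaysNear σ tw b g₂ 0 G₂ D)
    (hw₁ : ∃ r ∈ Icc 0 G₁, dist (γ w) (g₁ r) ≤ M) (hw₂ : ∃ r ∈ Icc 0 G₂, dist (γ w) (g₂ r) ≤ M)
    (ha : dist (γ w) e - M ≤ dist (σ a) e) (hb : dist (γ w) e - M ≤ dist (σ b) e) :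
    ∃ t₁ ∈ Icc a tw, ∃ t₂ ∈ Icc tw b,
      (∀ t ∈ Icc a t₁, dist (γ w) e - (M + eps + 1) ≤ dist (σ t) e) ∧
      (∀ t ∈ Icc t₂ b, dist (γ w) e - (M + eps + 1) ≤ dist (σ t) e) ∧
      ∀ t ∈ Ioo t₁ t₂, dist (σ t) (γ w) ≤
        (2 * D + 3 * M + eps) + lam ^ 2 * (2 * (2 * D + 3 * M + eps) + eps) + eps := by
  have heps := hσ.eps_nonneg (htw.1.trans htw.2)
  have hM : 0 ≤ M := by obtain ⟨r, -, h⟩ := hw₁; exact dist_nonneg.trans h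
  rcases le_or_gt (dist (γ w) e - M) (dist (σ tw) e) with hshallow | hdeep
  · refine ⟨tw, ⟨htw.1, le_rfl⟩, tw, ⟨le_rfl, htw.2⟩, fun t ht => ?_, fun t ht => ?_,
      fun t ht => absurd (ht.1.trans ht.2) (lt_irrefl _)⟩
    · linarith [hmin t ⟨ht.1, ht.2.trans htw.2⟩]
    · linarith [hmin t ⟨htw.1.trans ht.1, ht.2⟩]
  have hsub₁ : Icc a tw ⊆ Icc a b := Icc_subset_Icc le_rfl htw.2
  have hsub₂ : Icc tw b ⊆ Icc a b := Icc_subset_Icc htw.1 le_rfl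
  obtain ⟨t₁, ht₁, ht₁V, hbefore⟩ := exists_first_crossing hlam htw.1
    (fun s hs t ht => hσ.abs_dist_sub_le e (hsub₁ hs) (hsub₁ ht)) ha hdeep.le
  obtain ⟨t₂, ht₂, ht₂V, hafter⟩ := exists_last_crossing hlam htw.2
    (fun s hs t ht => hσ.abs_dist_sub_le e (hsub₂ hs) (hsub₂ ht)) hdeep.le hb
  have hnear : ∀ {g' : ℝ → X} {G' t : ℝ}, IsGeodesicFrom g' e G' →
      (∃ r ∈ Icc 0 G', dist (σ t) (g' r) ≤ D) → (∃ r ∈ Icc 0 G', dist (γ w) (g' r) ≤ M) →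
      |dist (σ t) e - (dist (γ w) e - M)| ≤ eps → dist (σ t) (γ w) ≤ 2 * D + 3 * M + eps := by
    rintro g' G' t hg' ⟨r, hr, hσr⟩ ⟨r', hr', hγr'⟩ hV
    have := hg'.dist_le hr hr' hσr hγr'
    have := abs_sub_le (dist (σ t) e) (dist (γ w) e - M) (dist (γ w) e)
    rw [sub_sub_cancel_left, abs_neg, abs_of_nonneg hM] at this
    linarith
  refine ⟨t₁, ht₁, t₂, ht₂, fun t ht => ?_, fun t ht => ?_, fun t ht =>
    hσ.dist_le_of_endpoints hlam (hsub₁ ht₁) (hsub₂ ht₂) (hnear hg₁ (h₁ t₁ ht₁) hw₁ ht₁V)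
      (hnear hg₂ (h₂ t₂ ht₂) hw₂ ht₂V) ⟨ht.1.le, ht.2.le⟩⟩
  · rcases ht.2.lt_or_eq with h | rfl
    · linarith [hbefore t ⟨ht.1, h⟩]
    · linarith [abs_le.1 ht₁V]
  · rcases ht.1.lt_or_eq with h | rfl
    · linarith [hafter t ⟨h, ht.2⟩]
    · linarith [abs_le.1 ht₂V]

def boundTwoSides (N : ℝ → ℝ → ℝ) (M lam eps : ℝ) : ℝ :=
  max (2 * morseBound N (2 * lam + 1) (eps + 2) + 2 * M +
      (M + 1 + eps + pinchBound lam eps (4 * morseBound N (2 * lam + 1) (eps + 2))))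
    ((2 * morseBound N (2 * lam + 1) (eps + 2) + 3 * M + eps) +
      lam ^ 2 * (2 * (2 * morseBound N (2 * lam + 1) (eps + 2) + 3 * M + eps) + eps) + eps)

theorem exists_split_at_closest (hX : GeodesicSpace X)
    (hg₁ : IsGeodesicFrom g₁ e G₁) (hN₁ : IsMorseWith N (g₁ '' Icc 0 G₁))
    (hg₂ : IsGeodesicFrom g₂ e G₂) (hN₂ : IsMorseWith N (g₂ '' Icc 0 G₂))
    (hlam : 1 ≤ lam) (heps : 0 ≤ eps) (hab : a ≤ b) (hσ : IsQuasiGeodesicOn lam eps a b σ)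
    (ha : σ a ∈ g₁ '' Icc 0 G₁) (hb : σ b ∈ g₂ '' Icc 0 G₂) :
    ∃ tw ∈ Icc a b, (∀ t ∈ Icc a b, dist (σ tw) e ≤ dist (σ t) e + 1) ∧
      StaysNear σ a tw g₁ 0 G₁ (morseBound N (2 * lam + 1) (eps + 2)) ∧
      StaysNear σ tw b g₂ 0 G₂ (morseBound N (2 * lam + 1) (eps + 2)) := by
  obtain ⟨tw, htw, hmin⟩ := exists_forall_le_add_one (f := fun t => dist (σ t) e)
    (nonempty_Icc.2 hab) ⟨0, by rintro _ ⟨t, -, rfl⟩; exact dist_nonneg⟩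
  have hsub₁ : Icc a tw ⊆ Icc a b := Icc_subset_Icc le_rfl htw.2
  have hsub₂ : Icc tw b ⊆ Icc a b := Icc_subset_Icc htw.1 le_rfl
  exact ⟨tw, htw, hmin,
    staysNear_of_closest_end hX hg₁ hN₁ hlam heps htw.1 (hσ.mono_Icc hsub₁) ha
      fun t ht => hmin t (hsub₁ ht),
    staysNear_of_closest_start hX hg₂ hN₂ hlam heps htw.2 (hσ.mono_Icc hsub₂) hb
      fun t ht => hmin t (hsub₂ ht)⟩

theorem staysNear_of_endpoints_on_two (hX : GeodesicSpace X)
    (hg₁ : IsGeodesicFrom g₁ e G₁) (hN₁ : IsMorseWith N (g₁ '' Icc 0 G₁))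
    (hg₂ : IsGeodesicFrom g₂ e G₂) (hN₂ : IsMorseWith N (g₂ '' Icc 0 G₂))
    (hγ : ContinuousOn γ (Icc u v)) (huw : u ≤ w) (hwv : w ≤ v)
    (hγ₁ : StaysNear γ u w g₁ 0 G₁ M) (hγ₂ : StaysNear γ w v g₂ 0 G₂ M)
    (hw : ∀ s ∈ Icc u v, dist (γ w) e ≤ dist (γ s) e)
    (hlam : 1 ≤ lam) (heps : 0 ≤ eps) (hab : a ≤ b) (hσ : IsQuasiGeodesicOn lam eps a b σ)
    (hp : p ∈ Icc 0 G₁) (hq : q ∈ Icc 0 G₂) (hσa : σ a = g₁ p) (hσb : σ b = g₂ q)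
    (hup : dist (γ u) (g₁ p) ≤ M) (hvq : dist (γ v) (g₂ q) ≤ M) :
    StaysNear σ a b γ u v (boundTwoSides N M lam eps) := by
  set D := morseBound N (2 * lam + 1) (eps + 2)
  have hD : 0 ≤ D := zero_le_one.trans (one_le_morseBound _ _ _)
  set Λ := pinchBound lam eps (4 * D)
  have hΛ : 0 ≤ Λ := pinchBound_nonneg heps (by positivity)
  have hM : 0 ≤ M := dist_nonneg.trans hup
  obtain ⟨tw, htw, hmin, h₁, h₂⟩ := exists_split_at_closest hX hg₁ hN₁ hg₂ hN₂ hlam heps hab hσ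
    ⟨p, hp, hσa.symm⟩ ⟨q, hq, hσb.symm⟩
  have hpu := abs_le.1 (hg₁.abs_sub_dist_le hp hup)
  have hqv := abs_le.1 (hg₂.abs_sub_dist_le hq hvq)
  have hσa' : dist (σ a) e = p := by rw [hσa, hg₁.dist_apply hp]
  have hσb' : dist (σ b) e = q := by rw [hσb, hg₂.dist_apply hq]
  have hhi₁ : ∀ t ∈ Icc a tw, dist (σ t) e ≤ dist (γ u) e + (M + 1 + Λ) := fun t ht => by
    have := h₁.dist_le_max_add hg₁ (hσ.mono_Icc (Icc_subset_Icc le_rfl htw.2)) (by linarith)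
      heps hD ht
    linarith [max_le_iff.2 ⟨le_add_of_nonneg_right zero_le_one, hmin a ⟨le_rfl, hab⟩⟩]
  have hhi₂ : ∀ t ∈ Icc tw b, dist (σ t) e ≤ dist (γ v) e + (M + 1 + Λ) := fun t ht => by
    have := h₂.dist_le_max_add hg₂ (hσ.mono_Icc (Icc_subset_Icc htw.1 le_rfl)) (by linarith)
      heps hD ht
    linarith [max_le_iff.2 ⟨hmin b ⟨hab, le_rfl⟩, le_add_of_nonneg_right zero_le_one⟩]
  have hwu := hw u ⟨le_rfl, huw.trans hwv⟩
  have hwv' := hw v ⟨huw.trans hwv, le_rfl⟩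
  obtain ⟨t₁, ht₁, t₂, ht₂, hlo₁, hlo₂, hmid⟩ := exists_dive_times hg₁ hg₂ (by linarith) hσ htw
    hmin h₁ h₂ (hγ₁ w ⟨huw, le_rfl⟩) (hγ₂ w ⟨le_rfl, hwv⟩) (by linarith) (by linarith)
  have hside₁ := hγ₁.staysNear_of_window hg₁ (hγ.mono (Icc_subset_Icc le_rfl hwv)) huw
    (by positivity : 0 ≤ M + 1 + eps + Λ) (h₁.mono_Icc (Icc_subset_Icc le_rfl ht₁.2))
    (fun t ht => by linarith [hlo₁ t ht, min_le_right (dist (γ u) e) (dist (γ w) e)])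
    (fun t ht => by
      linarith [hhi₁ t ⟨ht.1, ht.2.trans ht₁.2⟩, le_max_left (dist (γ u) e) (dist (γ w) e)])
  have hside₂ := hγ₂.staysNear_of_window hg₂ (hγ.mono (Icc_subset_Icc huw le_rfl)) hwv
    (by positivity : 0 ≤ M + 1 + eps + Λ) (h₂.mono_Icc (Icc_subset_Icc ht₂.1 le_rfl))
    (fun t ht => by linarith [hlo₂ t ht, min_le_left (dist (γ w) e) (dist (γ v) e)])
    (fun t ht => by
      linarith [hhi₂ t ⟨ht₂.1.trans ht.1, ht.2⟩, le_max_right (dist (γ w) e) (dist (γ v) e)])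
  intro t ht
  rcases le_or_gt t t₁ with h | h
  · obtain ⟨s, hs, hd⟩ := hside₁ t ⟨ht.1, h⟩
    exact ⟨s, ⟨hs.1, hs.2.trans hwv⟩, hd.trans (le_max_left _ _)⟩
  rcases le_or_gt t₂ t with h' | h'
  · obtain ⟨s, hs, hd⟩ := hside₂ t ⟨h', ht.2⟩
    exact ⟨s, ⟨huw.trans hs.1, hs.2⟩, hd.trans (le_max_left _ _)⟩
  · exact ⟨w, ⟨huw, hwv⟩, (hmid t ⟨h, h'⟩).trans (le_max_right _ _)⟩

end ThirdSide

/-- `(3, 2) = (2 λ + 1, ε + 2)` for the geodesic `γ` itself, `(λ, ε) = (1, 0)`. -/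
def slimBound (N : ℝ → ℝ → ℝ) : ℝ := morseBound N 3 2

theorem exists_corner {N : ℝ → ℝ → ℝ} {α β γ : ℝ → X} {e : X} {A B L : ℝ}
    (hX : GeodesicSpace X) (hα : IsGeodesicFrom α e A) (hαN : IsMorseWith N (α '' Icc 0 A))
    (hβ : IsGeodesicFrom β e B) (hβN : IsMorseWith N (β '' Icc 0 B)) (hγ : IsGeodesicOn γ 0 L)
    (hL : 0 ≤ L) (hγ₀ : γ 0 = α A) (hγL : γ L = β B) :
    ∃ w ∈ Icc 0 L, (∀ s ∈ Icc 0 L, dist (γ w) e ≤ dist (γ s) e) ∧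
      StaysNear γ 0 w α 0 A (slimBound N) ∧ StaysNear γ w L β 0 B (slimBound N) := by
  obtain ⟨w, hw, hmin⟩ := isCompact_Icc.exists_isMinOn (nonempty_Icc.2 hL)
    ((continuous_id.dist continuous_const).comp_continuousOn hγ.continuousOn)
  have hmin' : ∀ s ∈ Icc 0 L, dist (γ w) e ≤ dist (γ s) e := fun s hs => hmin hs
  have hslim : slimBound N = morseBound N (2 * 1 + 1) (0 + 2) := by norm_num [slimBound]
  refine ⟨w, hw, hmin', ?_, ?_⟩ <;> rw [hslim]
  · exact staysNear_of_closest_end hX hα hαN le_rfl le_rfl hw.1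
      (hγ.isQuasiGeodesicOn.mono_Icc (Icc_subset_Icc le_rfl hw.2))
      ⟨A, ⟨hα.nonneg, le_rfl⟩, hγ₀.symm⟩
      fun t ht => by linarith [hmin' t ⟨ht.1, ht.2.trans hw.2⟩]
  · exact staysNear_of_closest_start hX hβ hβN le_rfl le_rfl hw.2
      (hγ.isQuasiGeodesicOn.mono_Icc (Icc_subset_Icc hw.1 le_rfl))
      ⟨B, ⟨hβ.nonneg, le_rfl⟩, hγL.symm⟩
      fun t ht => by linarith [hmin' t ⟨hw.1.trans ht.1, ht.2⟩]

theorem isMorseWith_image_of_staysNear {γ : ℝ → X} {c d : ℝ} {N' : ℝ → ℝ → ℝ}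
    (hN' : ∀ lam eps, 1 ≤ lam → 0 ≤ eps → 0 ≤ N' lam eps)
    (h : ∀ lam eps, 1 ≤ lam → 0 ≤ eps → ∀ a b, a < b → ∀ σ : ℝ → X,
      IsQuasiGeodesicOn lam eps a b σ → ∀ s₁ s₂, c ≤ s₁ → s₁ ≤ s₂ → s₂ ≤ d →
      σ a = γ s₁ → σ b = γ s₂ → StaysNear σ a b γ c d (N' lam eps)) :
    IsMorseWith N' (γ '' Icc c d) := by
  rintro lam eps hlam heps a b hab σ hσ ⟨s₁, hs₁, hσa⟩ ⟨s₂, hs₂, hσb⟩ t ht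
  have hnear : StaysNear σ a b γ c d (N' lam eps) → infDist (σ t) (γ '' Icc c d) ≤ N' lam eps := by
    intro h'
    obtain ⟨s, hs, hd⟩ := h' t ht
    exact (infDist_le_dist_of_mem (mem_image_of_mem γ hs)).trans hd
  rcases hab.eq_or_lt with rfl | hab
  · rw [le_antisymm ht.2 ht.1, ← hσa, infDist_zero_of_mem (mem_image_of_mem γ hs₁)]
    exact hN' lam eps hlam heps
  rcases le_total s₁ s₂ with h₁₂ | h₂₁
  · exact hnear (h lam eps hlam heps a b hab σ hσ s₁ s₂ hs₁.1 h₁₂ hs₂.2 hσa.symm hσb.symm)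
  · exact hnear (h lam eps hlam heps a b hab _ hσ.reverse s₂ s₁ hs₂.1 h₂₁ hs₁.2
      (by simp [hσb]) (by simp [hσa])).of_reverse

def stableGauge (N : ℝ → ℝ → ℝ) (lam eps : ℝ) : ℝ :=
  max (boundSameSide N (slimBound N) lam (eps + 2 * slimBound N))
    (boundTwoSides N (slimBound N) lam (eps + 2 * slimBound N)) + slimBound N

theorem stableGauge_nonneg (N : ℝ → ℝ → ℝ) {lam eps : ℝ} (heps : 0 ≤ eps) :
    0 ≤ stableGauge N lam eps := by
  have hM : 0 ≤ slimBound N := zero_le_one.trans (one_le_morseBound N 3 2)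
  have hD := zero_le_one.trans (one_le_morseBound N lam (eps + 2 * slimBound N))
  have hΛ := pinchBound_nonneg (lam := lam) (by unfold slimBound; positivity :
    0 ≤ eps + 2 * slimBound N) (by positivity : 0 ≤ 4 * morseBound N lam (eps + 2 * slimBound N))
  have hP : 0 ≤ boundSameSide N (slimBound N) lam (eps + 2 * slimBound N) := by
    unfold boundSameSide slimBound at *
    linarith
  exact add_nonneg (hP.trans (le_max_left _ _)) hM

theorem isMorseWith_of_mem_stratum (hX : GeodesicSpace X) {N : ℝ → ℝ → ℝ} {e x y : X}
    (hx : x ∈ stratum N e) (hy : y ∈ stratum N e) {γ : ℝ → X} (hγ : IsGeodesicSegment γ x y) :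
    IsMorseWith (stableGauge N) (γ '' Icc 0 (dist x y)) := by
  obtain ⟨α, ⟨hα₀, hαx, hα⟩, hαN⟩ := hx
  obtain ⟨β, ⟨hβ₀, hβy, hβ⟩, hβN⟩ := hy
  obtain ⟨hγx, hγy, hγ : IsGeodesicOn γ 0 (dist x y)⟩ := hγ
  have hα' : IsGeodesicFrom α e (dist e x) := ⟨dist_nonneg, hα₀, hα⟩
  have hβ' : IsGeodesicFrom β e (dist e y) := ⟨dist_nonneg, hβ₀, hβ⟩
  obtain ⟨w, hw, hwmin, hγα, hγβ⟩ := exists_corner hX hα' hαN hβ' hβN hγ dist_nonneg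
    (hγx.trans hαx.symm) (hγy.trans hβy.symm)
  have hM : 0 ≤ slimBound N := zero_le_one.trans (one_le_morseBound N 3 2)
  refine isMorseWith_image_of_staysNear (fun _ _ _ heps => stableGauge_nonneg N heps)
    fun lam eps hlam heps a b hab σ hσ s₁ s₂ hs₁ hs₁₂ hs₂ hσa hσb => ?_
  have hγc := hγ.continuousOn.mono (Icc_subset_Icc hs₁ hs₂)
  have heps' : 0 ≤ eps + 2 * slimBound N := by positivity
  rcases le_total s₂ w with h₂w | hws₂
  · obtain ⟨p, hp, hpγ⟩ := hγα s₁ ⟨hs₁, hs₁₂.trans h₂w⟩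
    obtain ⟨q, hq, hqγ⟩ := hγα s₂ ⟨hs₁.trans hs₁₂, h₂w⟩
    obtain ⟨σ', hσ', hσ'a, hσ'b, hσσ'⟩ :=
      hσ.exists_endpoints_update hab.ne hM (by rwa [hσa]) (by rwa [hσb])
    exact (staysNear_of_endpoints_on hα' hαN hγc hs₁₂ (hγα.mono_Icc (Icc_subset_Icc hs₁ h₂w))
      hlam heps' hab.le hσ' hp hq hσ'a hσ'b hpγ hqγ).of_dist_le hσσ' (Icc_subset_Icc hs₁ hs₂)
      (add_le_add_left (le_max_left _ _) _)
  rcases le_total w s₁ with hws₁ | hs₁w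
  · obtain ⟨p, hp, hpγ⟩ := hγβ s₁ ⟨hws₁, hs₁₂.trans hs₂⟩
    obtain ⟨q, hq, hqγ⟩ := hγβ s₂ ⟨hws₂, hs₂⟩
    obtain ⟨σ', hσ', hσ'a, hσ'b, hσσ'⟩ :=
      hσ.exists_endpoints_update hab.ne hM (by rwa [hσa]) (by rwa [hσb])
    exact (staysNear_of_endpoints_on hβ' hβN hγc hs₁₂ (hγβ.mono_Icc (Icc_subset_Icc hws₁ hs₂))
      hlam heps' hab.le hσ' hp hq hσ'a hσ'b hpγ hqγ).of_dist_le hσσ' (Icc_subset_Icc hs₁ hs₂)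
      (add_le_add_left (le_max_left _ _) _)
  · obtain ⟨p, hp, hpγ⟩ := hγα s₁ ⟨hs₁, hs₁w⟩
    obtain ⟨q, hq, hqγ⟩ := hγβ s₂ ⟨hws₂, hs₂⟩
    obtain ⟨σ', hσ', hσ'a, hσ'b, hσσ'⟩ :=
      hσ.exists_endpoints_update hab.ne hM (by rwa [hσa]) (by rwa [hσb])
    exact (staysNear_of_endpoints_on_two hX hα' hαN hβ' hβN hγc hs₁w hws₂
      (hγα.mono_Icc (Icc_subset_Icc hs₁ le_rfl)) (hγβ.mono_Icc (Icc_subset_Icc le_rfl hs₂))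
      (fun s hs => hwmin s ⟨hs₁.trans hs.1, hs.2.trans hs₂⟩) hlam heps' hab.le hσ' hp hq hσ'a hσ'b
      hpγ hqγ).of_dist_le hσσ' (Icc_subset_Icc hs₁ hs₂) (add_le_add_left (le_max_right _ _) _)

/-- For every Morse gauge `N` there is a gauge `N'` depending only on `N` such that in any
geodesic space, any geodesic between two points of `X_e^{(N)}` is `N'`-Morse; in
particular `X_e^{(N)}` is `N'`-stable: every pair of its points is joined by an
`N'`-Morse geodesic of `X`. -/
theorem stratum_stable (N : ℝ → ℝ → ℝ) :
    ∃ N' : ℝ → ℝ → ℝ, ∀ (X : Type) [MetricSpace X], GeodesicSpace X → ∀ e : X,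
      (∀ x ∈ stratum N e, ∀ y ∈ stratum N e, ∀ γ : ℝ → X,
        IsGeodesicSegment γ x y → IsMorseSegment N' γ x y) ∧
      (∀ x ∈ stratum N e, ∀ y ∈ stratum N e, ∃ γ : ℝ → X, IsMorseSegment N' γ x y) := by
  refine ⟨stableGauge N, fun X _ hX e => ⟨fun x hx y hy γ hγ => ⟨hγ, ?_⟩, fun x hx y hy => ?_⟩⟩
  · exact isMorseWith_of_mem_stratum hX hx hy hγ
  · obtain ⟨γ, hγ⟩ := hX x y
    exact ⟨γ, hγ, isMorseWith_of_mem_stratum hX hx hy hγ⟩
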